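/- For identical jobs with t(πᵢ,j)=p_j, the completion time satisfies C(πᵢ,j) = Σ_{l=1}^{j} p_l + (i−1)·max_{l≤j} p_l. -/
import Mathlib


/-- Flowshop completion times: `Cmax t i j` is the completion time of the
job in position `i` (0-based) on machine `j` (0-based), for processing
times `t i j`. -/
noncomputable def Cmax (t : ℕ → ℕ → ℝ) : ℕ → ℕ → ℝ
  | 0, 0 => t 0 0
  | (i+1), 0 => Cmax t i 0 + t (i+1) 0
  | 0, (j+1) => Cmax t 0 j + t 0 (j+1)
  | (i+1), (j+1) => max (Cmax t i (j+1)) (Cmax t (i+1) j) + t (i+1) (j+1)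
  termination_by i j => (i, j)

/-- Standby (idle) time of machine `j` before the job in position `i`. -/
noncomputable def Tidle (t : ℕ → ℕ → ℝ) : ℕ → ℕ → ℝ
  | _, 0 => 0
  | 0, (j+1) => Cmax t 0 j
  | (i+1), (j+1) => max (Cmax t (i+1) j - Cmax t i (j+1)) 0

/-- Identical jobs: closed form `C(πᵢ,j) = Σ_{l≤j} p_l + (i−1)·max_{l≤j} p_l`
(0-based: position `i` contributes `i` copies of the bottleneck time). -/
theorem completion_identical_jobs (p : ℕ → ℝ) (hp : ∀ j, 0 ≤ p j)
    (t : ℕ → ℕ → ℝ) (htp : ∀ i j, t i j = p j) (i j : ℕ) :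
    Cmax t i j = (∑ l ∈ Finset.range (j + 1), p l)
      + (i : ℝ) * (Finset.range (j + 1)).sup'
          (Finset.nonempty_range_iff.mpr (Nat.succ_ne_zero j)) p := by
  induction j generalizing i with
  | zero =>
    induction i with
    | zero => simp [Cmax, htp]
    | succ i ih =>
      rw [Cmax, ih, htp]
      push_cast
      simp
      ring
  | succ j ihj =>
    have hM : (Finset.range (j + 2)).sup'
        (Finset.nonempty_range_iff.mpr (Nat.succ_ne_zero (j+1))) p
        = max (p (j+1)) ((Finset.range (j + 1)).sup'
          (Finset.nonempty_range_iff.mpr (Nat.succ_ne_zero j)) p) := by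
      apply le_antisymm
      · apply Finset.sup'_le
        intro l hl
        rcases Nat.lt_succ_iff_lt_or_eq.mp (Finset.mem_range.mp hl) with h | h
        · exact le_max_of_le_right (Finset.le_sup' p (Finset.mem_range.mpr h))
        · subst h; exact le_max_left _ _
      · refine max_le (Finset.le_sup' p (Finset.mem_range.mpr (by omega)))
          (Finset.sup'_le _ _ fun l hl =>
            Finset.le_sup' p (Finset.mem_range.mpr (by
              have := Finset.mem_range.mp hl; omega)))
    induction i with
    | zero =>
      rw [Cmax, ihj 0, htp, Finset.sum_range_succ, hM]
      simp [Finset.sum_range_succ]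
    | succ i ihi =>
      rw [Cmax, ihi, ihj (i+1), htp, hM, Finset.sum_range_succ]
      set M := (Finset.range (j + 1)).sup'
          (Finset.nonempty_range_iff.mpr (Nat.succ_ne_zero j)) p with hMdef
      push_cast
      rcases le_total (p (j+1)) M with h | h
      · rw [max_eq_right h, max_eq_right (by nlinarith)]
        ring
      · rw [max_eq_left h, max_eq_left (by nlinarith)]
        ring
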